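/- Births occur at maximum spanning tree weights: Let p ≥ 2, let w be an injective edge-weight function on the complete graph K_p, let T be the unique maximum spanning tree of (K_p, w), and for ε ∈ ℝ let G_ε be the threshold graph with edge set {e : w(e) > ε}. Then for every ε, the number of connected components of G_ε equals 1 + #{e ∈ E(T) : w(e) ≤ ε}. In particular, the zeroth Betti number of the graph filtration increases by exactly one as the threshold passes each maximum spanning tree edge weight. -/

import Mathlib

open SimpleGraph

/-- The total edge weight of a graph `T` with respect to the weight function `w`. -/
noncomputable def graphWeight {V : Type*} (w : Sym2 V → ℝ) (T : SimpleGraph V) : ℝ :=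
  ∑ᶠ e ∈ T.edgeSet, w e

/-- `T` is a maximum spanning tree of `G` with respect to the edge weights `w`. -/
def IsMaxSpanningTree {V : Type*} (G : SimpleGraph V) (w : Sym2 V → ℝ)
    (T : SimpleGraph V) : Prop :=
  T ≤ G ∧ T.IsTree ∧
    ∀ T' : SimpleGraph V, T' ≤ G → T'.IsTree → graphWeight w T' ≤ graphWeight w T

/-- The number of connected components (zeroth Betti number) of a simple graph. -/
noncomputable def numComp {V : Type*} (G : SimpleGraph V) : ℕ :=
  Nat.card G.ConnectedComponent

/-- The threshold graph of a weighted simple graph at level `ε`: the spanning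
subgraph whose edges are the edges of `G` of weight strictly greater than `ε`. -/
def thresholdGraph {V : Type*} (G : SimpleGraph V) (w : Sym2 V → ℝ) (ε : ℝ) :
    SimpleGraph V :=
  SimpleGraph.fromEdgeSet {e | e ∈ G.edgeSet ∧ ε < w e}


/-!
Let `S` be the set of edges of `T` of weight at most `ε`. The forest `T \ S` is a subgraph of the
threshold graph with the same connected components: if `ε < w(ab)` for an edge `ab` of `G` and
some `f ∈ S` lay on the path from `a` to `b` in `T`, exchanging `f` for `ab` would give a spanning
tree of weight `w(T) - w(f) + w(ab) > w(T)`. Deleting the edges of `S` from the tree `T` one at a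
time, each of them is a bridge when it is deleted, so each raises the number of components by one.
-/

namespace SimpleGraph

variable {V : Type*} {G H T : SimpleGraph V}

lemma Reachable.of_forall_adj_reachable (h : ∀ u v, G.Adj u v → H.Reachable u v) {u v : V}
    (huv : G.Reachable u v) : H.Reachable u v := by
  obtain ⟨p⟩ := huv
  induction p with
  | nil => rfl
  | cons ha _ ih => exact (h _ _ ha).trans ih

lemma Reachable.deleteEdges_or (x y : V) {u v : V} (h : G.Reachable u v) :
    (G.deleteEdges {s(x, y)}).Reachable u v ∨ (G.deleteEdges {s(x, y)}).Reachable u x ∨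
      (G.deleteEdges {s(x, y)}).Reachable u y := by
  obtain ⟨p⟩ := h
  induction p with
  | nil => exact .inl .rfl
  | @cons u z v ha _ ih =>
    by_cases he : s(u, z) = s(x, y)
    · rcases Sym2.eq_iff.mp he with ⟨rfl, -⟩ | ⟨rfl, -⟩
      · exact .inr (.inl .rfl)
      · exact .inr (.inr .rfl)
    · have ha' : (G.deleteEdges {s(x, y)}).Adj u z := by
        simpa [deleteEdges_adj, ha] using he
      exact ih.imp ha'.reachable.trans (Or.imp ha'.reachable.trans ha'.reachable.trans)

lemma IsAcyclic.not_reachable_deleteEdges_of_mem_edges (hG : G.IsAcyclic) {u v : V}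
    {p : G.Walk u v} (hp : p.IsPath) {e : Sym2 V} (he : e ∈ p.edges) :
    ¬(G.deleteEdges {e}).Reachable u v := by
  classical
  rintro ⟨q⟩
  have hqp : q.bypass.mapLe (deleteEdges_le _) = p := congrArg Subtype.val <|
    (hG.subsingleton_path u v).elim ⟨_, q.bypass_isPath.mapLe _⟩ ⟨p, hp⟩
  rw [← hqp, Walk.edges_mapLe_eq_edges] at he
  have := q.bypass.edges_subset_edgeSet he
  simp [edgeSet_deleteEdges] at this

lemma IsTree.deleteEdges_sup_edge (hT : T.IsTree) {x y a b : V}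
    (hab : ¬(T.deleteEdges {s(x, y)}).Reachable a b) :
    (T.deleteEdges {s(x, y)} ⊔ edge a b).IsTree := by
  set F := T.deleteEdges {s(x, y)}
  have hF : F ≤ F ⊔ edge a b := le_sup_left
  have hab' : (F ⊔ edge a b).Reachable a b :=
    Adj.reachable (Or.inr ((edge_adj a b a b).mpr ⟨.inl ⟨rfl, rfl⟩, fun h => hab (h ▸ .rfl)⟩))
  have side (z : V) : F.Reachable z x ∨ F.Reachable z y := by
    rcases (hT.connected.preconnected z x).deleteEdges_or x y with h | h | h
    exacts [.inl h, .inl h, .inr h]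
  have hxy : (F ⊔ edge a b).Reachable x y := by
    rcases side a with hax | hay <;> rcases side b with hbx | hby
    · exact (hab (hax.trans hbx.symm)).elim
    · exact (hax.symm.mono hF).trans (hab'.trans (hby.mono hF))
    · exact (hbx.symm.mono hF).trans (hab'.symm.trans (hay.mono hF))
    · exact (hab (hay.trans hby.symm)).elim
  refine ⟨(connected_iff_exists_forall_reachable _).mpr ⟨x, fun z => ?_⟩,
    (hT.isAcyclic.anti (deleteEdges_le _)).sup_edge_of_not_reachable hab⟩
  rcases side z with h | h
  · exact (h.mono hF).symm
  · exact hxy.trans (h.mono hF).symm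

end SimpleGraph

open SimpleGraph

variable {V : Type*} {G H T : SimpleGraph V}

lemma numComp_eq_of_le (hle : H ≤ G) (h : ∀ u v, G.Adj u v → H.Reachable u v) :
    numComp H = numComp G := by
  refine Nat.card_eq_of_bijective _ ⟨fun c d hcd => ?_, ConnectedComponent.surjective_map_ofLE hle⟩
  induction c using ConnectedComponent.ind with | _ u =>
  induction d using ConnectedComponent.ind with | _ v =>
  simp only [ConnectedComponent.map_mk, ConnectedComponent.eq] at hcd ⊢
  exact hcd.of_forall_adj_reachable h

lemma numComp_of_connected (hG : G.Connected) : numComp G = 1 :=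
  Nat.card_eq_one_iff_unique.mpr
    ⟨hG.preconnected.subsingleton_connectedComponent, hG.nonempty.map G.connectedComponentMk⟩

lemma numComp_deleteEdges_of_isBridge [Finite V] {a b : V} (hab : G.Adj a b)
    (hbr : G.IsBridge s(a, b)) : numComp (G.deleteEdges {s(a, b)}) = numComp G + 1 := by
  set G' := G.deleteEdges {s(a, b)}
  have hbr : ¬G'.Reachable a b := hbr
  let φ := ConnectedComponent.map (Hom.ofLE (deleteEdges_le {s(a, b)} : G' ≤ G))
  -- `φ` identifies only the two sides `[a]` and `[b]` of the bridge.
  have hφ : Set.BijOn φ {G'.connectedComponentMk b}ᶜ Set.univ := by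
    refine ⟨Set.mapsTo_univ _ _, fun c hc d hd hcd => ?_, fun c _ => ?_⟩
    · induction c using ConnectedComponent.ind with | _ u =>
      induction d using ConnectedComponent.ind with | _ v =>
      simp only [φ, Set.mem_compl_singleton_iff, ConnectedComponent.map_mk, Hom.ofLE_apply,
        ConnectedComponent.eq] at hc hd hcd ⊢
      rcases hcd.deleteEdges_or a b with h | hua | hub
      · exact h
      · rcases hcd.symm.deleteEdges_or a b with h | hva | hvb
        · exact h.symm
        · exact hua.trans hva.symm
        · exact (hd (ConnectedComponent.sound hvb)).elim
      · exact (hc (ConnectedComponent.sound hub)).elim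
    · induction c using ConnectedComponent.ind with | _ u =>
      by_cases hub : G'.Reachable u b
      · refine ⟨G'.connectedComponentMk a, by simpa [ConnectedComponent.eq] using hbr, ?_⟩
        exact ConnectedComponent.sound (hab.reachable.trans (hub.mono (deleteEdges_le _)).symm)
      · exact ⟨G'.connectedComponentMk u, by simpa [ConnectedComponent.eq] using hub, rfl⟩
  have hcard := Set.ncard_add_ncard_compl {G'.connectedComponentMk b}
  rw [Set.ncard_singleton, ← hφ.injOn.ncard_image, hφ.image_eq, Set.ncard_univ] at hcard
  rw [numComp, numComp]
  omega

lemma SimpleGraph.IsTree.numComp_deleteEdges [Finite V] (hT : T.IsTree) {S : Set (Sym2 V)}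
    (hS : S ⊆ T.edgeSet) : numComp (T.deleteEdges S) = 1 + S.ncard := by
  induction S, S.toFinite using Set.Finite.induction_on with
  | empty => simp [numComp_of_connected hT.connected]
  | @insert f S hfS hSfin ih =>
    induction f using Sym2.ind with | _ a b =>
    have hadj : (T.deleteEdges S).Adj a b := by
      rw [deleteEdges_adj]
      exact ⟨hS (Set.mem_insert _ _), hfS⟩
    have hbr : (T.deleteEdges S).IsBridge s(a, b) :=
      isAcyclic_iff_forall_isBridge.mp (hT.isAcyclic.anti (deleteEdges_le S)) hadj
    rw [Set.insert_eq, Set.union_comm, ← deleteEdges_deleteEdges,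
      numComp_deleteEdges_of_isBridge hadj hbr, ih ((Set.subset_insert _ _).trans hS),
      Set.ncard_union_eq (Set.disjoint_singleton_right.mpr hfS), Set.ncard_singleton]
    ring

lemma graphWeight_deleteEdges_add [Finite V] (w : Sym2 V → ℝ) {f : Sym2 V}
    (hf : f ∈ T.edgeSet) : graphWeight w (T.deleteEdges {f}) + w f = graphWeight w T := by
  rw [graphWeight, graphWeight, edgeSet_deleteEdges, add_comm,
    ← finsum_mem_insert w (fun h => h.2 rfl) (Set.toFinite _), Set.insert_sdiff_singleton,
    Set.insert_eq_of_mem hf]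

lemma graphWeight_sup_edge [Finite V] (w : Sym2 V → ℝ) {a b : V} (hab : a ≠ b)
    (hnadj : ¬H.Adj a b) : graphWeight w (H ⊔ edge a b) = graphWeight w H + w s(a, b) := by
  have hedges : (H ⊔ edge a b).edgeSet = insert s(a, b) H.edgeSet := by
    rw [edgeSet_sup, edgeSet_edge_of_ne hab, Set.union_singleton]
  rw [graphWeight, graphWeight, hedges, finsum_mem_insert w hnadj (Set.toFinite _), add_comm]

lemma thresholdGraph_adj {w : Sym2 V → ℝ} {ε : ℝ} {u v : V} :
    (thresholdGraph G w ε).Adj u v ↔ G.Adj u v ∧ ε < w s(u, v) := by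
  simp only [thresholdGraph, fromEdgeSet_adj, Set.mem_ofPred_eq, mem_edgeSet]
  exact ⟨fun h => h.1, fun h => ⟨h, h.1.ne⟩⟩

namespace IsMaxSpanningTree

variable {w : Sym2 V → ℝ}

lemma le (hT : IsMaxSpanningTree G w T) : T ≤ G := hT.1

lemma isTree (hT : IsMaxSpanningTree G w T) : T.IsTree := hT.2.1

variable [Finite V]

lemma le_of_not_reachable_deleteEdges (hT : IsMaxSpanningTree G w T) {f : Sym2 V}
    (hf : f ∈ T.edgeSet) {a b : V} (hab : G.Adj a b)
    (hsep : ¬(T.deleteEdges {f}).Reachable a b) : w s(a, b) ≤ w f := by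
  obtain ⟨hTG, hTtree, hTmax⟩ := hT
  induction f using Sym2.ind with | _ x y =>
  have hle : T.deleteEdges {s(x, y)} ⊔ edge a b ≤ G :=
    sup_le ((deleteEdges_le _).trans hTG) ((edge_le_iff G).mpr (.inr hab))
  have hmax := hTmax _ hle (hTtree.deleteEdges_sup_edge hsep)
  rw [graphWeight_sup_edge w hab.ne fun h => hsep h.reachable,
    ← graphWeight_deleteEdges_add w hf] at hmax
  linarith

lemma reachable_of_lt (hT : IsMaxSpanningTree G w T) {ε : ℝ} {a b : V} (hab : G.Adj a b)
    (hε : ε < w s(a, b)) : (T.deleteEdges {e ∈ T.edgeSet | w e ≤ ε}).Reachable a b := by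
  by_contra h
  obtain ⟨p, hp⟩ := hT.isTree.connected.exists_isPath a b
  obtain ⟨f, ⟨hfT, hfε⟩, hfp⟩ := p.exists_mem_edges_of_not_reachable_deleteEdges h
  have := hT.le_of_not_reachable_deleteEdges hfT hab
    (hT.isTree.isAcyclic.not_reachable_deleteEdges_of_mem_edges hp hfp)
  linarith

theorem numComp_thresholdGraph (hT : IsMaxSpanningTree G w T) (ε : ℝ) :
    numComp (thresholdGraph G w ε) = 1 + {e ∈ T.edgeSet | w e ≤ ε}.ncard := by
  have hle : T.deleteEdges {e ∈ T.edgeSet | w e ≤ ε} ≤ thresholdGraph G w ε := fun u v h => by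
    rw [deleteEdges_adj] at h
    exact thresholdGraph_adj.mpr ⟨hT.le h.1, not_le.mp fun hw => h.2 ⟨h.1, hw⟩⟩
  rw [← numComp_eq_of_le hle fun u v h =>
      hT.reachable_of_lt (thresholdGraph_adj.mp h).1 (thresholdGraph_adj.mp h).2,
    hT.isTree.numComp_deleteEdges fun e he => he.1]

end IsMaxSpanningTree

theorem births_at_mst_weights_general (p : ℕ) (w : Sym2 (Fin p) → ℝ)
    (T : SimpleGraph (Fin p)) (hT : IsMaxSpanningTree ⊤ w T) (ε : ℝ) :
    numComp (thresholdGraph ⊤ w ε) = 1 + {e ∈ T.edgeSet | w e ≤ ε}.ncard :=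
  hT.numComp_thresholdGraph ε

/-- Births occur at maximum spanning tree weights: for the complete graph `K_p`
(`p ≥ 2`) with injective edge weights `w` and maximum spanning tree `T`, the
number of connected components of the threshold graph `G_ε` equals
`1 + #{e ∈ E(T) : w e ≤ ε}` for every threshold `ε`. -/
theorem births_at_mst_weights (p : ℕ) (hp : 2 ≤ p) (w : Sym2 (Fin p) → ℝ)
    (hw : Set.InjOn w (⊤ : SimpleGraph (Fin p)).edgeSet)
    (T : SimpleGraph (Fin p)) (hT : IsMaxSpanningTree ⊤ w T) (ε : ℝ) :
    numComp (thresholdGraph ⊤ w ε) = 1 + {e ∈ T.edgeSet | w e ≤ ε}.ncard :=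
  births_at_mst_weights_general p w T hT ε
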